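/- For odd n ≥ 3, the cone generated by the extremal states {ω_i : 0 ≤ i < n} is self-dual: its dual cone equals itself. -/

import Mathlib

open Real

noncomputable def rn (n : ℕ) : ℝ := Real.sqrt (1 / Real.cos (π / n))

noncomputable def ωst (n : ℕ) (i : ℤ) : Fin 3 → ℝ :=
  ![rn n * Real.cos (2 * π * (i : ℝ) / n), rn n * Real.sin (2 * π * (i : ℝ) / n), 1]

noncomputable def eEv (n : ℕ) (j : ℤ) : Fin 3 → ℝ :=
  ![rn n * Real.cos ((2 * (j : ℝ) - 1) * π / n) / 2,
    rn n * Real.sin ((2 * (j : ℝ) - 1) * π / n) / 2, 1 / 2]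

noncomputable def eOd (n : ℕ) (j : ℤ) : Fin 3 → ℝ :=
  (1 / (1 + rn n ^ 2)) •
    ![rn n * Real.cos (2 * π * (j : ℝ) / n), rn n * Real.sin (2 * π * (j : ℝ) / n), 1]

noncomputable def ip (v w : Fin 3 → ℝ) : ℝ := v 0 * w 0 + v 1 * w 1 + v 2 * w 2

noncomputable def uE : Fin 3 → ℝ := ![0, 0, 1]

noncomputable def dualCone (C : Set (Fin 3 → ℝ)) : Set (Fin 3 → ℝ) :=
  {f | ∀ v ∈ C, 0 ≤ ip f v}

noncomputable def stateCone (n : ℕ) : Set (Fin 3 → ℝ) :=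
  {v | ∃ c : Fin n → ℝ, (∀ i, 0 ≤ c i) ∧ v = ∑ i, c i • ωst n ((i : ℕ) : ℤ)}

/-!
The `ωst n i` are the vertices of a regular `n`-gon at height `1`, and
`⟪ωst n i, ωst n j⟫ = r² cos (2π (i - j) / n) + 1` with `r² = sec (π / n)`. For odd `n` the angle
`2π (i - j) / n` stays at distance at least `π / n` from `π`, so all these products are
nonnegative and the cone lies in its dual. Conversely, for `f` in the dual, the horizontal part of
`f` lies in the angular sector of some edge `[ωst n m, ωst n (m + 1)]`, so
`f = a • ωst n m + b • ωst n (m + 1) + c • e₃` with `a, b ≥ 0`. For odd `n` the vertex opposite that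
edge is orthogonal to both of its ends, so pairing `f` with it gives `c ≥ 0`; and `e₃` is a
multiple of the barycentre of the vertices.
-/

lemma sin_sub_mul_cos_add_sin_sub_mul_cos (A B φ : ℝ) :
    sin (B - φ) * cos A + sin (φ - A) * cos B = sin (B - A) * cos φ := by
  simp only [sin_sub]; ring

lemma sin_sub_mul_sin_add_sin_sub_mul_sin (A B φ : ℝ) :
    sin (B - φ) * sin A + sin (φ - A) * sin B = sin (B - A) * sin φ := by
  simp only [sin_sub]; ring

lemma cos_pi_div_pos {n : ℕ} (hn : 2 < n) : 0 < cos (π / n) := by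
  have hn0 : (0 : ℝ) < n := by exact_mod_cast (by omega : 0 < n)
  refine cos_pos_of_mem_Ioo ⟨by linarith [div_pos pi_pos hn0, pi_pos], ?_⟩
  rw [div_lt_div_iff_of_pos_left pi_pos hn0 two_pos]
  exact_mod_cast hn

lemma rn_sq_mul_cos {n : ℕ} (hn : 2 < n) : rn n ^ 2 * cos (π / n) = 1 := by
  have := cos_pi_div_pos hn
  rw [rn, sq_sqrt (by positivity)]
  field_simp

lemma cos_two_pi_mul_div_eq_neg_cos {n x : ℝ} (hn : n ≠ 0) (hx : 2 * x = n + 1 ∨ 2 * x = n - 1) :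
    cos (2 * π * x / n) = -cos (π / n) := by
  rw [show 2 * π * x / n = π * (2 * x) / n by ring]
  rcases hx with hx | hx
  · rw [hx, show π * (n + 1) / n = π / n + π by field_simp; ring, cos_add_pi]
  · rw [hx, show π * (n - 1) / n = π - π / n by field_simp, cos_pi_sub]

lemma neg_cos_pi_div_le_cos_two_pi_mul_div {n : ℕ} (hn : Odd n) (k : ℤ) :
    -cos (π / n) ≤ cos (2 * π * k / n) := by
  obtain ⟨w, rfl⟩ := hn
  set n := 2 * w + 1
  have hn : (0 : ℝ) < n := by positivity
  -- `j` is the representative of `k` modulo `n` in `[-w, w]`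
  set j := (k + w) % n - w
  have hj : |(j : ℝ)| ≤ w := by
    have h0 := Int.emod_nonneg (k + w) (by omega : (n : ℤ) ≠ 0)
    have h1 := Int.emod_lt_of_pos (k + w) (by omega : (0 : ℤ) < n)
    exact_mod_cast abs_le.2 ⟨by omega, by omega⟩
  have hk : 2 * π * k / n = 2 * π * j / n + ((k + w) / n : ℤ) * (2 * π) := by
    have h : j + n * ((k + w) / n) = k := by
      have := Int.emod_add_mul_ediv (k + w) n
      omega
    have h' : (j : ℝ) + n * ((k + w) / n : ℤ) = k := by exact_mod_cast h
    rw [← h']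
    field_simp
  rw [hk, cos_add_int_mul_two_pi, ← cos_pi_sub, ← cos_abs (2 * π * j / n)]
  apply cos_le_cos_of_nonneg_of_le_pi (abs_nonneg _) (by linarith [div_pos pi_pos hn])
  rw [abs_div, abs_mul, abs_of_pos hn, abs_of_pos two_pi_pos]
  have hw : (2 * w : ℝ) = n - 1 := by simp only [n]; push_cast; ring
  calc 2 * π * |(j : ℝ)| / n ≤ 2 * π * w / n := by gcongr
    _ = π - π / n := by rw [show 2 * π * w / n = π * (2 * w) / n by ring, hw]; field_simp

lemma ωst_add_mul {n : ℕ} (hn : n ≠ 0) (k l : ℤ) : ωst n (k + n * l) = ωst n k := by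
  have h : 2 * π * ((k + n * l : ℤ) : ℝ) / n = 2 * π * k / n + l * (2 * π) := by
    push_cast; field_simp
  simp only [ωst, h, cos_add_int_mul_two_pi, sin_add_int_mul_two_pi]

lemma ip_eq_dotProduct (v w : Fin 3 → ℝ) : ip v w = v ⬝ᵥ w := by
  simp [ip, dotProduct, Fin.sum_univ_three]

lemma ip_comm (v w : Fin 3 → ℝ) : ip v w = ip w v := by
  simp only [ip_eq_dotProduct, dotProduct_comm]

lemma ip_ωst_ωst (n : ℕ) (i j : ℤ) :
    ip (ωst n i) (ωst n j) = rn n ^ 2 * cos (2 * π * (i - j : ℤ) / n) + 1 := by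
  rw [show 2 * π * ((i - j : ℤ) : ℝ) / n = 2 * π * i / n - 2 * π * j / n by push_cast; ring,
    cos_sub]
  simp only [ip, ωst, Fin.isValue, Matrix.cons_val_zero, Matrix.cons_val_one, Matrix.cons_val,
    mul_one, add_left_inj]
  ring

lemma ip_ωst_ωst_nonneg {n : ℕ} (hn : Odd n) (h3 : 3 ≤ n) (i j : ℤ) :
    0 ≤ ip (ωst n i) (ωst n j) := by
  rw [ip_ωst_ωst]
  nlinarith [neg_cos_pi_div_le_cos_two_pi_mul_div hn (i - j), rn_sq_mul_cos h3, sq_nonneg (rn n)]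

lemma ip_ωst_ωst_eq_zero {n : ℕ} (h3 : 3 ≤ n) {i j : ℤ}
    (hij : 2 * (j - i) = n + 1 ∨ 2 * (j - i) = n - 1) : ip (ωst n i) (ωst n j) = 0 := by
  have hij' : 2 * ((j - i : ℤ) : ℝ) = n + 1 ∨ 2 * ((j - i : ℤ) : ℝ) = n - 1 := by
    rcases hij with h | h
    · exact .inl (by exact_mod_cast h)
    · exact .inr (by exact_mod_cast h)
  rw [ip_ωst_ωst, ← neg_sub, Int.cast_neg, mul_neg, neg_div, cos_neg,
    cos_two_pi_mul_div_eq_neg_cos (by positivity) hij']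
  linarith [rn_sq_mul_cos h3]

lemma add_mem_stateCone {n : ℕ} {u v : Fin 3 → ℝ} (hu : u ∈ stateCone n) (hv : v ∈ stateCone n) :
    u + v ∈ stateCone n := by
  obtain ⟨c, hc, rfl⟩ := hu
  obtain ⟨d, hd, rfl⟩ := hv
  exact ⟨c + d, fun i => add_nonneg (hc i) (hd i), by simp [add_smul, Finset.sum_add_distrib]⟩

lemma smul_mem_stateCone {n : ℕ} {a : ℝ} {v : Fin 3 → ℝ} (ha : 0 ≤ a) (hv : v ∈ stateCone n) :
    a • v ∈ stateCone n := by
  obtain ⟨c, hc, rfl⟩ := hv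
  exact ⟨a • c, fun i => mul_nonneg ha (hc i), by simp [Finset.smul_sum, smul_smul]⟩

lemma ωst_mem_stateCone {n : ℕ} (hn : n ≠ 0) (k : ℤ) : ωst n k ∈ stateCone n := by
  have h0 := Int.emod_nonneg k (by omega : (n : ℤ) ≠ 0)
  have h1 := Int.emod_lt_of_pos k (by omega : (0 : ℤ) < n)
  let i : Fin n := ⟨(k % n).toNat, by omega⟩
  refine ⟨Pi.single i 1, fun j => ?_, ?_⟩
  · by_cases h : j = i <;> simp [h]
  · have hk : ωst n ((i : ℕ) : ℤ) = ωst n k := by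
      rw [← ωst_add_mul hn _ (k / n)]
      congr 1
      have := Int.emod_add_mul_ediv k n
      simp only [i]
      omega
    simp [← hk, Pi.single_apply]

lemma sum_ωst {n : ℕ} (hn : 1 < n) : ∑ i : Fin n, ωst n ((i : ℕ) : ℤ) = (n : ℝ) • uE := by
  have hζ := Complex.isPrimitiveRoot_exp n (by omega)
  have hsum := hζ.geom_sum_eq_zero hn
  have hpow (i : ℕ) : Complex.exp (2 * π * Complex.I / n) ^ i
      = Complex.exp ((2 * π * i / n : ℝ) * Complex.I) := by
    rw [← Complex.exp_nat_mul]; push_cast; ring_nf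
  have hcos : ∑ i : Fin n, cos (2 * π * (i : ℕ) / n) = 0 := by
    have := congrArg Complex.re hsum
    simp only [Complex.re_sum, hpow, Complex.exp_ofReal_mul_I_re, Complex.zero_re] at this
    simpa [Fin.sum_univ_eq_sum_range (fun i : ℕ => cos (2 * π * i / n))] using this
  have hsin : ∑ i : Fin n, sin (2 * π * (i : ℕ) / n) = 0 := by
    have := congrArg Complex.im hsum
    simp only [Complex.im_sum, hpow, Complex.exp_ofReal_mul_I_im, Complex.zero_im] at this
    simpa [Fin.sum_univ_eq_sum_range (fun i : ℕ => sin (2 * π * i / n))] using this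
  ext j
  fin_cases j <;> simp [ωst, uE, Finset.sum_apply, ← Finset.mul_sum, hcos, hsin]

lemma uE_mem_stateCone {n : ℕ} (hn : 1 < n) : uE ∈ stateCone n := by
  refine ⟨fun _ => 1 / n, fun _ => by positivity, ?_⟩
  rw [← Finset.smul_sum, sum_ωst hn, smul_smul]
  field_simp
  simp

lemma ip_nonneg_of_mem_stateCone {n : ℕ} {u v : Fin 3 → ℝ}
    (hu : ∀ i : Fin n, 0 ≤ ip u (ωst n i)) (hv : v ∈ stateCone n) : 0 ≤ ip u v := by
  obtain ⟨c, hc, rfl⟩ := hv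
  rw [ip_eq_dotProduct, dotProduct_sum]
  refine Finset.sum_nonneg fun i _ => ?_
  rw [dotProduct_smul, smul_eq_mul, ← ip_eq_dotProduct]
  exact mul_nonneg (hc i) (hu i)

lemma stateCone_subset_dualCone {n : ℕ} (hn : Odd n) (h3 : 3 ≤ n) :
    stateCone n ⊆ dualCone (stateCone n) := by
  intro f hf v hv
  refine ip_nonneg_of_mem_stateCone (fun i => ?_) hv
  rw [ip_comm]
  exact ip_nonneg_of_mem_stateCone (fun j => ip_ωst_ωst_nonneg hn h3 i j) hf

lemma exists_two_pi_mul_div_le_le {n : ℕ} (hn : 0 < n) (φ : ℝ) :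
    ∃ m : ℤ, 2 * π * m / n ≤ φ ∧ φ ≤ 2 * π * (m + 1 : ℤ) / n := by
  set p := 2 * π / n
  have hp : 0 < p := by positivity
  refine ⟨⌊φ / p⌋, ?_, ?_⟩
  · calc 2 * π * (⌊φ / p⌋ : ℝ) / n = ⌊φ / p⌋ * p := by ring
      _ ≤ φ := (le_div_iff₀ hp).1 (Int.floor_le _)
  · calc φ ≤ (⌊φ / p⌋ + 1) * p := (div_le_iff₀ hp).1 (Int.lt_floor_add_one _).le
      _ = 2 * π * ((⌊φ / p⌋ + 1 : ℤ) : ℝ) / n := by push_cast; ring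

lemma exists_nonneg_combination_cos_sin {A B φ s : ℝ} (hs : 0 ≤ s) (hAφ : A ≤ φ) (hφB : φ ≤ B)
    (hAB : A < B) (hBA : B - A < π) :
    ∃ a b : ℝ, 0 ≤ a ∧ 0 ≤ b ∧ s * cos φ = a * cos A + b * cos B ∧
      s * sin φ = a * sin A + b * sin B := by
  have hsin : 0 < sin (B - A) := sin_pos_of_pos_of_lt_pi (by linarith) hBA
  refine ⟨s * sin (B - φ) / sin (B - A), s * sin (φ - A) / sin (B - A), ?_, ?_, ?_, ?_⟩
  · exact div_nonneg (mul_nonneg hs (sin_nonneg_of_nonneg_of_le_pi (by linarith) (by linarith)))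
      hsin.le
  · exact div_nonneg (mul_nonneg hs (sin_nonneg_of_nonneg_of_le_pi (by linarith) (by linarith)))
      hsin.le
  · rw [div_mul_eq_mul_div, div_mul_eq_mul_div, ← add_div, eq_div_iff hsin.ne']
    linear_combination -s * sin_sub_mul_cos_add_sin_sub_mul_cos A B φ
  · rw [div_mul_eq_mul_div, div_mul_eq_mul_div, ← add_div, eq_div_iff hsin.ne']
    linear_combination -s * sin_sub_mul_sin_add_sin_sub_mul_sin A B φ

lemma exists_eq_smul_ωst_add_smul_ωst_add_smul_uE {n : ℕ} (h3 : 3 ≤ n) (f : Fin 3 → ℝ) :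
    ∃ (m : ℤ) (a b c : ℝ), 0 ≤ a ∧ 0 ≤ b ∧ f = a • ωst n m + b • ωst n (m + 1) + c • uE := by
  have hn3 : (3 : ℝ) ≤ n := by exact_mod_cast h3
  set z : ℂ := ⟨f 0, f 1⟩
  obtain ⟨m, hAφ, hφB⟩ := exists_two_pi_mul_div_le_le (n := n) (by omega) z.arg
  have hwidth : 2 * π * (m + 1 : ℤ) / n - 2 * π * m / n = 2 * π / n := by push_cast; ring
  have hwidth_pos : 0 < 2 * π / n := by positivity
  have hwidth_lt_pi : 2 * π / n < π := by
    rw [div_lt_iff₀ (by positivity)]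
    nlinarith [pi_pos]
  obtain ⟨a, b, ha, hb, hcos, hsin⟩ :=
    exists_nonneg_combination_cos_sin (norm_nonneg z) hAφ hφB (by linarith) (by linarith)
  have hr : 0 < rn n := sqrt_pos.2 (by simpa using cos_pi_div_pos h3)
  refine ⟨m, a / rn n, b / rn n, f 2 - a / rn n - b / rn n,
    div_nonneg ha hr.le, div_nonneg hb hr.le, ?_⟩
  rw [Complex.norm_mul_cos_arg] at hcos
  rw [Complex.norm_mul_sin_arg] at hsin
  ext j
  fin_cases j
  · show z.re = a / rn n * (rn n * cos _) + b / rn n * (rn n * cos _) + _ * 0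
    rw [hcos, mul_zero, add_zero]
    field_simp
  · show z.im = a / rn n * (rn n * sin _) + b / rn n * (rn n * sin _) + _ * 0
    rw [hsin, mul_zero, add_zero]
    field_simp
  · show f 2 = a / rn n * 1 + b / rn n * 1 + (f 2 - a / rn n - b / rn n) * 1
    ring

lemma mem_stateCone_of_forall_ip_nonneg {n : ℕ} (hn : Odd n) (h3 : 3 ≤ n) {f : Fin 3 → ℝ}
    (hf : ∀ k : ℤ, 0 ≤ ip f (ωst n k)) : f ∈ stateCone n := by
  obtain ⟨w, hw⟩ := hn
  obtain ⟨m, a, b, c, ha, hb, rfl⟩ := exists_eq_smul_ωst_add_smul_ωst_add_smul_uE h3 f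
  have hc : 0 ≤ c := by
    have hk := hf (m + w + 1)
    have h1 : ip (ωst n m) (ωst n (m + w + 1)) = 0 := ip_ωst_ωst_eq_zero h3 (.inl (by omega))
    have h2 : ip (ωst n (m + 1)) (ωst n (m + w + 1)) = 0 :=
      ip_ωst_ωst_eq_zero h3 (.inr (by omega))
    rw [ip_eq_dotProduct] at hk
    simp only [add_dotProduct, smul_dotProduct, ← ip_eq_dotProduct, h1, h2] at hk
    simpa [ip, uE, ωst] using hk
  have hn0 : n ≠ 0 := by omega
  exact add_mem_stateCone (add_mem_stateCone (smul_mem_stateCone ha (ωst_mem_stateCone hn0 _))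
    (smul_mem_stateCone hb (ωst_mem_stateCone hn0 _))) (smul_mem_stateCone hc
    (uE_mem_stateCone (by omega)))

theorem ngon_odd_strong_self_duality (n : ℕ) (hn : Odd n) (h3 : 3 ≤ n) :
    dualCone (stateCone n) = stateCone n := by
  refine subset_antisymm (fun f hf => ?_) (stateCone_subset_dualCone hn h3)
  exact mem_stateCone_of_forall_ip_nonneg hn h3 fun k => hf _ (ωst_mem_stateCone (by omega) k)
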